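/- arXiv:1608.02731 — 2 statements merged into one kernel-verified Lean document; each statement's English description precedes it below -/
import Mathlib

section
/- Let (Ω, F, P) be a probability space carrying two independent random variables R, Y : Ω → {0, 1}, each taking the values 0 and 1 with probability 1/2. For each integer t with 1 ≤ t ≤ 1000, define λ_t : Ω → {0, 1} by λ_1 := Y and, for t ≥ 2, λ_t := 1 if R = 1 and λ_t := Y if R = 0. Then ∑_{t=1}^{1000} E[R − λ_t] = −999/4; in particular |∑_{t=1}^{1000} E[R − λ_t]| = (1/4)·1000 − (1/4)·1 > 249, so the sum is nonzero. -/
/-!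
For `R, Y ∈ {0, 1}` and `t ≥ 2`, `λ_t = R + (1 - R) Y`, so `R - λ_t = -(1 - R) Y`, whose
expectation is `-(1 - E R) E Y = -1/4` by independence, while `E[R - λ_1] = E R - E Y = 0`.
Summing over a horizon `H` gives `-(H - 1)/4`.
-/

open MeasureTheory ProbabilityTheory

section ZeroOne

variable {Ω : Type*} {mΩ : MeasurableSpace Ω} {μ : Measure Ω} {f : Ω → ℝ}

lemma eq_indicator_one_of_zero_or_one (h01 : ∀ ω, f ω = 0 ∨ f ω = 1) :
    f = {ω | f ω = 1}.indicator 1 := by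
  funext ω
  rcases h01 ω with h | h <;> simp [h]

lemma integral_eq_measureReal_of_zero_or_one (hf : Measurable f)
    (h01 : ∀ ω, f ω = 0 ∨ f ω = 1) : ∫ ω, f ω ∂μ = μ.real {ω | f ω = 1} := by
  conv_lhs => rw [eq_indicator_one_of_zero_or_one h01]
  exact integral_indicator_one (hf (measurableSet_singleton 1))

lemma integrable_of_zero_or_one [IsFiniteMeasure μ] (hf : Measurable f)
    (h01 : ∀ ω, f ω = 0 ∨ f ω = 1) : Integrable f μ := by
  rw [eq_indicator_one_of_zero_or_one h01]
  exact (integrable_const 1).indicator (hf (measurableSet_singleton 1))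

end ZeroOne

lemma ite_eq_add_one_sub_mul {r : ℝ} (y : ℝ) (hr : r = 0 ∨ r = 1) :
    (if r = 1 then 1 else y) = r + (1 - r) * y := by
  rcases hr with rfl | rfl <;> norm_num

section LazyPSRL

variable {Ω : Type*} {mΩ : MeasurableSpace Ω} {μ : Measure Ω} [IsProbabilityMeasure μ]
  {R Y : Ω → ℝ} {lam : ℕ → Ω → ℝ}

lemma integral_sub_lam_of_two_le (hR : Measurable R) (hY : Measurable Y)
    (hR01 : ∀ ω, R ω = 0 ∨ R ω = 1) (hindep : IndepFun R Y μ)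
    {t : ℕ} (hlam : ∀ ω, lam t ω = if R ω = 1 then 1 else Y ω) :
    ∫ ω, (R ω - lam t ω) ∂μ = -((1 - ∫ ω, R ω ∂μ) * ∫ ω, Y ω ∂μ) := by
  have hpt : ∀ ω, R ω - lam t ω = -((1 - R ω) * Y ω) := fun ω => by
    rw [hlam, ite_eq_add_one_sub_mul _ (hR01 ω)]; ring
  have hindep' : IndepFun (fun ω => 1 - R ω) Y μ :=
    hindep.comp (measurable_const.sub measurable_id) measurable_id
  have hRint : Integrable R μ := integrable_of_zero_or_one hR hR01
  rw [integral_congr_ae (.of_forall hpt), integral_neg,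
    hindep'.integral_fun_mul_eq_mul_integral (by fun_prop) hY.aestronglyMeasurable,
    integral_sub (integrable_const 1) hRint, integral_const, probReal_univ, one_smul]

lemma sum_integral_sub_lam (hR : Measurable R) (hY : Measurable Y)
    (hR01 : ∀ ω, R ω = 0 ∨ R ω = 1) (hY01 : ∀ ω, Y ω = 0 ∨ Y ω = 1)
    (hindep : IndepFun R Y μ) (hlam1 : lam 1 = Y)
    (hlam : ∀ t, 2 ≤ t → ∀ ω, lam t ω = if R ω = 1 then 1 else Y ω) {H : ℕ} (hH : 1 ≤ H) :
    ∑ t ∈ Finset.Icc 1 H, ∫ ω, (R ω - lam t ω) ∂μ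
      = (∫ ω, R ω ∂μ - ∫ ω, Y ω ∂μ) - (H - 1) * ((1 - ∫ ω, R ω ∂μ) * ∫ ω, Y ω ∂μ) := by
  have hfirst : ∫ ω, (R ω - lam 1 ω) ∂μ = ∫ ω, R ω ∂μ - ∫ ω, Y ω ∂μ := by
    rw [hlam1, integral_sub (integrable_of_zero_or_one hR hR01)
      (integrable_of_zero_or_one hY hY01)]
  have hrest : ∀ t ∈ Finset.Ioc 1 H, ∫ ω, (R ω - lam t ω) ∂μ
      = -((1 - ∫ ω, R ω ∂μ) * ∫ ω, Y ω ∂μ) := fun t ht =>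
    integral_sub_lam_of_two_le hR hY hR01 hindep (hlam t (Finset.mem_Ioc.mp ht).1)
  rw [Finset.Icc_eq_cons_Ioc hH, Finset.sum_cons, hfirst, Finset.sum_congr rfl hrest,
    Finset.sum_const, Nat.card_Ioc, nsmul_eq_mul, Nat.cast_sub hH, Nat.cast_one]
  ring

end LazyPSRL

lemma integral_eq_half_of_zero_or_one {Ω : Type*} {mΩ : MeasurableSpace Ω} {μ : Measure Ω}
    {f : Ω → ℝ} (hf : Measurable f) (h01 : ∀ ω, f ω = 0 ∨ f ω = 1)
    (hhalf : μ {ω | f ω = 1} = 1/2) : ∫ ω, f ω ∂μ = 1/2 := by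
  rw [integral_eq_measureReal_of_zero_or_one hf h01, measureReal_def, hhalf]
  simp

/-- Explicit counterexample (Example 2) to step (*) in the proof of Theorem 2 of the
Lazy-PSRL paper: with `R, Y` independent, each uniform on `{0,1}`, and
`λ_1 = Y`, `λ_t = 1` if `R = 1` and `λ_t = Y` if `R = 0` for `t ≥ 2`, we have
`∑_{t=1}^{1000} E[R − λ_t] = −999/4`; in particular its absolute value equals
`(1/4)·1000 − (1/4)·1 > 249`, so the sum is nonzero. -/
theorem lazy_psrl_counterexample
    {Ω : Type*} {mΩ : MeasurableSpace Ω}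
    (μ : Measure Ω) [IsProbabilityMeasure μ]
    (R Y : Ω → ℝ) (hR : Measurable R) (hY : Measurable Y)
    (hR01 : ∀ ω, R ω = 0 ∨ R ω = 1) (hY01 : ∀ ω, Y ω = 0 ∨ Y ω = 1)
    (hRhalf : μ {ω | R ω = 1} = 1/2) (hYhalf : μ {ω | Y ω = 1} = 1/2)
    (hindep : IndepFun R Y μ)
    (lam : ℕ → Ω → ℝ)
    (hlam1 : lam 1 = Y)
    (hlam : ∀ t, 2 ≤ t → ∀ ω, lam t ω = if R ω = 1 then 1 else Y ω) :
    (∑ t ∈ Finset.Icc 1 1000, ∫ ω, (R ω - lam t ω) ∂μ) = -(999/4) ∧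
    |∑ t ∈ Finset.Icc 1 1000, ∫ ω, (R ω - lam t ω) ∂μ|
      = (1/4) * 1000 - (1/4) * 1 ∧
    ((1 : ℝ)/4) * 1000 - (1/4) * 1 > 249 ∧
    (∑ t ∈ Finset.Icc 1 1000, ∫ ω, (R ω - lam t ω) ∂μ) ≠ 0 := by
  have hsum : (∑ t ∈ Finset.Icc 1 1000, ∫ ω, (R ω - lam t ω) ∂μ) = -(999/4) := by
    rw [sum_integral_sub_lam hR hY hR01 hY01 hindep hlam1 hlam (by norm_num),
      integral_eq_half_of_zero_or_one hR hR01 hRhalf,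
      integral_eq_half_of_zero_or_one hY hY01 hYhalf]
    norm_num
  refine ⟨hsum, ?_, by norm_num, ?_⟩ <;> rw [hsum] <;> norm_num
end

section
/- Let (Ω, F, P) be a probability space carrying two independent random variables R, Y : Ω → {0, 1}, each taking the values 0 and 1 with probability 1/2. Define the episode length L : Ω → ℕ by L := 1 if R = 1 and L := 1000 if R = 0. Then E[R] = E[Y] (indeed E[R − Y] = 0), yet E[L · (R − Y)] = −999/4 ≠ 0. -/
/-!
Write `p = P(R = 1)` and `q = P(Y = 1)`. For `{0,1}`-valued `R` the length-weighted difference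
`(if R = 1 then a else b) * (R - Y)` equals `a R + (b - a) R Y - b Y`, so by independence its mean is
`a p + (b - a) p q - b q`, whereas the mean of `R - Y` is `p - q`. With `p = q = 1/2`, `a = 1`,
`b = 1000` the first is `(a - b) / 4 = -999/4` while the second vanishes: the episode is long exactly
when the true reward is low, and this correlation is what the weighting picks up.
-/

open MeasureTheory ProbabilityTheory

section ZeroOneValued

variable {Ω : Type*} {mΩ : MeasurableSpace Ω} {μ : Measure Ω} {X : Ω → ℝ}

lemma indicator_setOf_eq_one_of_zero_or_one (hX01 : ∀ ω, X ω = 0 ∨ X ω = 1) :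
    {ω | X ω = 1}.indicator 1 = X := by
  funext ω
  rcases hX01 ω with h | h <;> simp [h]

lemma integral_eq_measureReal_of_zero_or_one_s5 (hX : Measurable X)
    (hX01 : ∀ ω, X ω = 0 ∨ X ω = 1) : ∫ ω, X ω ∂μ = μ.real {ω | X ω = 1} := by
  conv_lhs => rw [← indicator_setOf_eq_one_of_zero_or_one hX01]
  exact integral_indicator_one (hX (measurableSet_singleton 1))

lemma integrable_of_zero_or_one_s5 [IsFiniteMeasure μ] (hX : Measurable X)
    (hX01 : ∀ ω, X ω = 0 ∨ X ω = 1) : Integrable X μ := by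
  rw [← indicator_setOf_eq_one_of_zero_or_one hX01]
  exact (integrable_const 1).indicator (hX (measurableSet_singleton 1))

end ZeroOneValued

lemma ite_mul_sub_eq_of_zero_or_one {r : ℝ} (hr : r = 0 ∨ r = 1) (a b y : ℝ) :
    (if r = 1 then a else b) * (r - y) = a * r + (b - a) * (r * y) - b * y := by
  rcases hr with rfl | rfl <;> simp only [zero_ne_one, if_true, if_false] <;> ring

theorem integral_ite_mul_sub_of_indepFun {Ω : Type*} {mΩ : MeasurableSpace Ω} {μ : Measure Ω}
    [IsFiniteMeasure μ] {R Y : Ω → ℝ} (hR : Measurable R) (hY : Measurable Y)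
    (hR01 : ∀ ω, R ω = 0 ∨ R ω = 1) (hY01 : ∀ ω, Y ω = 0 ∨ Y ω = 1) (hindep : IndepFun R Y μ)
    (a b : ℝ) :
    ∫ ω, (if R ω = 1 then a else b) * (R ω - Y ω) ∂μ =
      a * μ.real {ω | R ω = 1} + (b - a) * (μ.real {ω | R ω = 1} * μ.real {ω | Y ω = 1}) -
        b * μ.real {ω | Y ω = 1} := by
  have hiR := integrable_of_zero_or_one_s5 (μ := μ) hR hR01
  have hiY := integrable_of_zero_or_one_s5 (μ := μ) hY hY01
  have hiRY : Integrable (fun ω => R ω * Y ω) μ := hindep.integrable_mul hiR hiY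
  have hERY : ∫ ω, R ω * Y ω ∂μ = μ.real {ω | R ω = 1} * μ.real {ω | Y ω = 1} := by
    rw [← integral_eq_measureReal_of_zero_or_one_s5 hR hR01,
      ← integral_eq_measureReal_of_zero_or_one_s5 hY hY01]
    exact hindep.integral_mul_eq_mul_integral hiR.aestronglyMeasurable hiY.aestronglyMeasurable
  simp_rw [ite_mul_sub_eq_of_zero_or_one (hR01 _)]
  have hiA : Integrable (fun ω => a * R ω + (b - a) * (R ω * Y ω)) μ :=
    (hiR.const_mul a).add (hiRY.const_mul (b - a))
  rw [integral_sub hiA (hiY.const_mul b), integral_add (hiR.const_mul a) (hiRY.const_mul (b - a)),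
    integral_const_mul, integral_const_mul, integral_const_mul, hERY,
    integral_eq_measureReal_of_zero_or_one_s5 hR hR01, integral_eq_measureReal_of_zero_or_one_s5 hY hY01]

/-- The key observation (equation (8)): with `R, Y` independent, each uniform on `{0,1}`,
and episode length `L = 1` if `R = 1` and `L = 1000` if `R = 0`, we have
`E[R] = E[Y]` (indeed `E[R − Y] = 0`), yet `E[L·(R − Y)] = −999/4 ≠ 0`. -/
theorem length_weighted_difference_nonzero
    {Ω : Type*} {mΩ : MeasurableSpace Ω}
    (μ : Measure Ω) [IsProbabilityMeasure μ]
    (R Y : Ω → ℝ) (hR : Measurable R) (hY : Measurable Y)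
    (hR01 : ∀ ω, R ω = 0 ∨ R ω = 1) (hY01 : ∀ ω, Y ω = 0 ∨ Y ω = 1)
    (hRhalf : μ {ω | R ω = 1} = 1/2) (hYhalf : μ {ω | Y ω = 1} = 1/2)
    (hindep : IndepFun R Y μ)
    (L : Ω → ℕ) (hL : ∀ ω, L ω = if R ω = 1 then 1 else 1000) :
    (∫ ω, R ω ∂μ = ∫ ω, Y ω ∂μ) ∧
    (∫ ω, (R ω - Y ω) ∂μ = 0) ∧
    (∫ ω, (L ω : ℝ) * (R ω - Y ω) ∂μ = -(999/4)) ∧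
    (-(999/4) : ℝ) ≠ 0 := by
  have hpR : μ.real {ω | R ω = 1} = 1 / 2 := by simp [measureReal_def, hRhalf]
  have hpY : μ.real {ω | Y ω = 1} = 1 / 2 := by simp [measureReal_def, hYhalf]
  have hER : ∫ ω, R ω ∂μ = 1 / 2 := by rw [integral_eq_measureReal_of_zero_or_one_s5 hR hR01, hpR]
  have hEY : ∫ ω, Y ω ∂μ = 1 / 2 := by rw [integral_eq_measureReal_of_zero_or_one_s5 hY hY01, hpY]
  have hLcast : ∀ ω, (L ω : ℝ) = if R ω = 1 then 1 else 1000 := fun ω => by simp [hL ω]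
  refine ⟨hER.trans hEY.symm, ?_, ?_, by norm_num⟩
  · rw [integral_sub (integrable_of_zero_or_one_s5 hR hR01) (integrable_of_zero_or_one_s5 hY hY01),
      hER, hEY, sub_self]
  · simp_rw [hLcast]
    rw [integral_ite_mul_sub_of_indepFun hR hY hR01 hY01 hindep, hpR, hpY]
    norm_num
end
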